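/- arXiv:math/0611580 — 3 statements merged into one kernel-verified Lean document; each statement's English description precedes it below -/
import Mathlib

section
/- Let X be a nearest-neighbour path on ℤ started at 0 and let n ≥ 0 be such that T_n < ∞. Then T_n = K_n − U_0^n + n + 2 Σ_{k=0}^n U_k^n. -/
open MeasureTheory ProbabilityTheory Filter Finset Topology Asymptotics
open scoped ENNReal NNReal

noncomputable section

/-- The combinatorial identity `T_n = K_n − U_0^n + n + 2 Σ_{k=0}^n U_k^n` for a
nearest-neighbour path started at `0`, where `T` is the hitting time of level `n`,
`K_n` the time spent in the negative half-line up to time `T`, and `U_i^n` the number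
of jumps from `i` to `i-1` before time `T`. -/
theorem hitting_time_identity
    (X : ℕ → ℤ) (h0 : X 0 = 0) (hnn : ∀ k, |X (k + 1) - X k| = 1)
    (n T : ℕ) (hT : X T = (n : ℤ)) (hTmin : ∀ k < T, X k ≠ (n : ℤ)) :
    (T : ℤ) = (((Finset.range (T + 1)).filter fun k => X k < 0).card : ℤ)
        - (((Finset.range T).filter fun k => X k = 0 ∧ X (k + 1) = -1).card : ℤ)
        + (n : ℤ)
        + 2 * ∑ i ∈ Finset.range (n + 1),
            ((((Finset.range T).filter
              fun k => X k = (i : ℤ) ∧ X (k + 1) = (i : ℤ) - 1).card : ℤ)) := by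
  have hstep : ∀ k, X (k + 1) = X k + 1 ∨ X (k + 1) = X k - 1 := by
    intro k
    have h := hnn k
    rcases abs_eq (by norm_num : (0:ℤ) ≤ 1) |>.mp h with h | h
    · left; omega
    · right; omega
  have hle : ∀ k, k ≤ T → X k ≤ (n : ℤ) := by
    intro k
    induction k with
    | zero => intro _; rw [h0]; exact Int.natCast_nonneg n
    | succ m ih =>
      intro hk
      have hm : m < T := by omega
      have h1 := ih (le_of_lt hm)
      have h2 := hTmin m hm
      rcases hstep m with h | h <;> omega
  -- per-step identity
  have key : ∀ k < T, (1 : ℤ) =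
      (if X k < 0 then (1:ℤ) else 0)
      - (if X k = 0 ∧ X (k + 1) = -1 then (1:ℤ) else 0)
      + (X (k + 1) - X k)
      + 2 * (if 0 ≤ X k ∧ X k ≤ (n:ℤ) ∧ X (k + 1) = X k - 1 then (1:ℤ) else 0)
      - (min (X (k + 1)) 0 - min (X k) 0) := by
    intro k hk
    have h2 : X k ≤ (n:ℤ) := hle k hk.le
    rcases hstep k with h | h <;>
      rw [min_def, min_def] <;> split_ifs <;> omega
  -- cards as sums of indicators
  have cardK : (((Finset.range (T + 1)).filter fun k => X k < 0).card : ℤ)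
      = ∑ k ∈ Finset.range T, (if X k < 0 then (1:ℤ) else 0) := by
    rw [Finset.card_filter]
    push_cast
    rw [Finset.sum_range_succ, hT,
      if_neg (not_lt.mpr (Int.natCast_nonneg n)), add_zero]
  have cardU0 : (((Finset.range T).filter fun k => X k = 0 ∧ X (k + 1) = -1).card : ℤ)
      = ∑ k ∈ Finset.range T, (if X k = 0 ∧ X (k + 1) = -1 then (1:ℤ) else 0) := by
    rw [Finset.card_filter]; push_cast; rfl
  have cardU : (∑ i ∈ Finset.range (n + 1),
        ((((Finset.range T).filter
          fun k => X k = (i : ℤ) ∧ X (k + 1) = (i : ℤ) - 1).card : ℤ)))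
      = ∑ k ∈ Finset.range T,
          (if 0 ≤ X k ∧ X k ≤ (n:ℤ) ∧ X (k + 1) = X k - 1 then (1:ℤ) else 0) := by
    have : ∀ i : ℕ, ((((Finset.range T).filter
          fun k => X k = (i : ℤ) ∧ X (k + 1) = (i : ℤ) - 1).card : ℤ))
        = ∑ k ∈ Finset.range T,
            (if X k = (i : ℤ) ∧ X (k + 1) = (i : ℤ) - 1 then (1:ℤ) else 0) := by
      intro i; rw [Finset.card_filter]; push_cast; rfl
    simp only [this]
    rw [Finset.sum_comm]
    refine Finset.sum_congr rfl fun k hk => ?_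
    by_cases h : 0 ≤ X k ∧ X k ≤ (n:ℤ) ∧ X (k + 1) = X k - 1
    · rw [if_pos h]
      obtain ⟨h1, h2, h3⟩ := h
      rw [Finset.sum_eq_single (X k).toNat]
      · rw [if_pos (by constructor <;> omega)]
      · intro b _ hbne
        rw [if_neg]
        rintro ⟨hb1, -⟩
        exact hbne (by omega)
      · intro hnm
        exact absurd (Finset.mem_range.mpr (by omega)) hnm
    · rw [if_neg h]
      refine Finset.sum_eq_zero fun i hi => ?_
      rw [if_neg]
      rintro ⟨h1, h2⟩
      have := Finset.mem_range.mp hi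
      exact h ⟨by omega, by omega, by omega⟩
  -- telescoping sums
  have tel1 : ∑ k ∈ Finset.range T, (X (k + 1) - X k) = (n : ℤ) := by
    rw [Finset.sum_range_sub, hT, h0, sub_zero]
  have tel2 : ∑ k ∈ Finset.range T, (min (X (k + 1)) 0 - min (X k) 0) = 0 := by
    rw [Finset.sum_range_sub (fun k => min (X k) 0), hT, h0]
    have : min ((n:ℤ)) 0 = 0 := min_eq_right (Int.natCast_nonneg n)
    rw [this]; simp
  rw [cardK, cardU0, cardU]
  calc (T : ℤ) = ∑ _k ∈ Finset.range T, (1 : ℤ) := by simp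
    _ = ∑ k ∈ Finset.range T,
        ((if X k < 0 then (1:ℤ) else 0)
          - (if X k = 0 ∧ X (k + 1) = -1 then (1:ℤ) else 0)
          + (X (k + 1) - X k)
          + 2 * (if 0 ≤ X k ∧ X k ≤ (n:ℤ) ∧ X (k + 1) = X k - 1 then (1:ℤ) else 0)
          - (min (X (k + 1)) 0 - min (X k) 0)) :=
      Finset.sum_congr rfl fun k hk => key k (Finset.mem_range.mp hk)
    _ = (∑ k ∈ Finset.range T, (if X k < 0 then (1:ℤ) else 0))
          - (∑ k ∈ Finset.range T, (if X k = 0 ∧ X (k + 1) = -1 then (1:ℤ) else 0))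
          + (∑ k ∈ Finset.range T, (X (k + 1) - X k))
          + 2 * (∑ k ∈ Finset.range T,
              (if 0 ≤ X k ∧ X k ≤ (n:ℤ) ∧ X (k + 1) = X k - 1 then (1:ℤ) else 0))
          - (∑ k ∈ Finset.range T, (min (X (k + 1)) 0 - min (X k) 0)) := by
      rw [Finset.sum_sub_distrib, Finset.sum_add_distrib, Finset.sum_add_distrib,
        Finset.sum_sub_distrib, Finset.mul_sum]
    _ = _ := by rw [tel1, tel2]; ring
end
end

section
/- E[A_{M−1}] = 2 Σ_{i=1}^M (1 − p_i). -/
open MeasureTheory ProbabilityTheory Filter Finset Topology Asymptotics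
open scoped ENNReal NNReal

noncomputable section

/-- Strength of the `i`-th cookie (1-indexed): `p i` for `1 ≤ i ≤ M`, `1/2` otherwise. -/
def strength (M : ℕ) (p : Fin M → ℝ) (i : ℕ) : ℝ :=
  if h : 1 ≤ i ∧ i ≤ M then p ⟨i - 1, by omega⟩ else 1 / 2

/-- `α(M,p̄) = Σ_{i=1}^M (2 p_i − 1) − 1`. -/
def cookieAlpha (M : ℕ) (p : Fin M → ℝ) : ℝ := (∑ i, (2 * p i - 1)) - 1

/-- `B` is a sequence of independent Bernoulli random variables with `P{B i = 1} = q i`. -/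
structure IsBernoulliSeq {Ω : Type*} [MeasurableSpace Ω] (q : ℕ → ℝ)
    (P : Measure Ω) (B : ℕ → Ω → Bool) : Prop where
  isProb : IsProbabilityMeasure P
  meas : ∀ i, Measurable (B i)
  indep : iIndepFun B P
  law : ∀ i, P {ω | B i ω = true} = ENNReal.ofReal (q i)

/-- `k_j`: the first time `k ≥ 1` such that `B_1, …, B_k` contains `j+1` successes. -/
def kjVar {Ω : Type*} (B : ℕ → Ω → Bool) (j : ℕ) (ω : Ω) : ℕ :=
  sInf {k | 1 ≤ k ∧ ((Finset.Icc 1 k).filter fun i => B i ω = true).card = j + 1}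

/-- `A_j`: the number of failures among `B_1, …, B_{k_j}`. -/
def AjVar {Ω : Type*} (B : ℕ → Ω → Bool) (j : ℕ) (ω : Ω) : ℕ :=
  ((Finset.Icc 1 (kjVar B j ω)).filter fun i => B i ω = false).card

namespace CookieLemma33

set_option linter.unusedSectionVars false

variable {Ω : Type*} [MeasurableSpace Ω]

/-- number of successes among `B_1, …, B_n`. -/
def S (B : ℕ → Ω → Bool) (n : ℕ) (ω : Ω) : ℕ :=
  ((Finset.Icc 1 n).filter fun i => B i ω = true).card

lemma S_le (B : ℕ → Ω → Bool) (n : ℕ) (ω : Ω) : S B n ω ≤ n :=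
  le_trans (Finset.card_filter_le _ _) (by simp [Nat.card_Icc])

lemma S_mono (B : ℕ → Ω → Bool) (ω : Ω) {n m : ℕ} (h : n ≤ m) : S B n ω ≤ S B m ω :=
  Finset.card_le_card (Finset.filter_subset_filter _ (Finset.Icc_subset_Icc_right h))

lemma S_succ (B : ℕ → Ω → Bool) (n : ℕ) (ω : Ω) :
    S B (n + 1) ω = S B n ω + (if B (n + 1) ω = true then 1 else 0) := by
  unfold S
  rw [show Finset.Icc 1 (n + 1) = insert (n + 1) (Finset.Icc 1 n) by
    rw [← Finset.Ico_add_one_right_eq_Icc, (show Finset.Ico 1 (n + 1 + 1) = insert (n + 1) (Finset.Ico 1 (n + 1)) from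
      Nat.Ico_succ_right_eq_insert_Ico (by omega)), Finset.Ico_add_one_right_eq_Icc]]
  rw [Finset.filter_insert]
  split
  · rw [Finset.card_insert_of_notMem (by simp), add_comm]
  · simp

lemma measurable_S {B : ℕ → Ω → Bool} (hmeas : ∀ i, Measurable (B i)) (n : ℕ) :
    Measurable (S B n) := by
  have : S B n = fun ω => ∑ i ∈ Finset.Icc 1 n, if B i ω = true then 1 else 0 := by
    funext ω; exact Finset.card_filter _ _
  rw [this]
  exact Finset.measurable_sum _ fun i _ =>
    (measurable_of_countable (fun b : Bool => if b = true then 1 else 0)).comp (hmeas i)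

lemma hit {M : ℕ} (hM : 1 ≤ M) {B : ℕ → Ω → Bool} {ω : Ω} {n : ℕ} (h : M ≤ S B n ω) :
    ∃ m, 1 ≤ m ∧ m ≤ n ∧ S B m ω = M := by
  induction n with
  | zero => simp [S] at h; omega
  | succ n ih =>
    by_cases hn : M ≤ S B n ω
    · obtain ⟨m, h1, h2, h3⟩ := ih hn
      exact ⟨m, h1, by omega, h3⟩
    · refine ⟨n + 1, by omega, le_rfl, ?_⟩
      have := S_succ B n ω
      split at this <;> omega

/-- spec of `kjVar B (M-1)` on the good event. -/
lemma kj_spec {M : ℕ} (hM : 1 ≤ M) {B : ℕ → Ω → Bool} {ω : Ω}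
    (hgood : ∃ n, M ≤ S B n ω) :
    1 ≤ kjVar B (M - 1) ω ∧ S B (kjVar B (M - 1) ω) ω = M ∧
      ∀ n < kjVar B (M - 1) ω, S B n ω < M := by
  have hj : M - 1 + 1 = M := by omega
  have hsetdef : {k | 1 ≤ k ∧ ((Finset.Icc 1 k).filter fun i => B i ω = true).card = M - 1 + 1}
      = {k | 1 ≤ k ∧ S B k ω = M} := by
    unfold S; rw [hj]
  have hne : {k | 1 ≤ k ∧ S B k ω = M}.Nonempty := by
    obtain ⟨n, hn⟩ := hgood
    obtain ⟨m, h1, _, h3⟩ := hit hM hn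
    exact ⟨m, h1, h3⟩
  have hk : kjVar B (M - 1) ω = sInf {k | 1 ≤ k ∧ S B k ω = M} := by
    unfold kjVar; rw [hsetdef]
  have hmem := Nat.sInf_mem hne
  refine ⟨by rw [hk]; exact hmem.1, by rw [hk]; exact hmem.2, fun n hn => ?_⟩
  by_contra hc
  push_neg at hc
  obtain ⟨m, h1, h2, h3⟩ := hit hM hc
  have : sInf {k | 1 ≤ k ∧ S B k ω = M} ≤ m := Nat.sInf_le ⟨h1, h3⟩
  omega

lemma A_eq {M : ℕ} (hM : 1 ≤ M) {B : ℕ → Ω → Bool} {ω : Ω}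
    (hgood : ∃ n, M ≤ S B n ω) :
    AjVar B (M - 1) ω = kjVar B (M - 1) ω - M := by
  obtain ⟨h1, h2, _⟩ := kj_spec hM hgood
  set k := kjVar B (M - 1) ω with hk
  have hsplit := Finset.card_filter_add_card_filter_not
    (s := Finset.Icc 1 k) (p := fun i => B i ω = true)
  have heq : (Finset.Icc 1 k).filter (fun i => ¬ B i ω = true)
      = (Finset.Icc 1 k).filter (fun i => B i ω = false) := by
    apply Finset.filter_congr; intro i _; simp
  rw [heq] at hsplit
  have hA : AjVar B (M - 1) ω = ((Finset.Icc 1 k).filter fun i => B i ω = false).card := rfl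
  have hS : S B k ω = ((Finset.Icc 1 k).filter fun i => B i ω = true).card := rfl
  have hcard : (Finset.Icc 1 k).card = k := by simp [Nat.card_Icc]
  omega

lemma tsum_f {M : ℕ} (hM : 1 ≤ M) {B : ℕ → Ω → Bool} {ω : Ω}
    (hgood : ∃ n, M ≤ S B n ω) :
    ∑' i : ℕ, (if 1 ≤ i ∧ B i ω = false ∧ S B (i - 1) ω < M then (1 : ℝ≥0∞) else 0)
      = (AjVar B (M - 1) ω : ℝ≥0∞) := by
  obtain ⟨hk1, hkS, hkmin⟩ := kj_spec hM hgood
  set k := kjVar B (M - 1) ω with hkdef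
  have hcond : ∀ i : ℕ, (1 ≤ i ∧ B i ω = false ∧ S B (i - 1) ω < M)
      ↔ (i ∈ Finset.Icc 1 k ∧ B i ω = false) := by
    intro i
    simp only [Finset.mem_Icc]
    constructor
    · rintro ⟨h1, h2, h3⟩
      refine ⟨⟨h1, ?_⟩, h2⟩
      by_contra hik
      push_neg at hik
      have : S B k ω ≤ S B (i - 1) ω := S_mono B ω (by omega)
      omega
    · rintro ⟨⟨h1, h2⟩, h3⟩
      exact ⟨h1, h3, hkmin _ (by omega)⟩
  rw [tsum_eq_sum (s := Finset.Icc 1 k) (fun i hi => by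
    rw [if_neg]; intro hc; exact hi ((hcond i).1 hc).1)]
  rw [Finset.sum_congr rfl (fun i hi => show _ = if B i ω = false then (1:ℝ≥0∞) else 0 by
    by_cases h : B i ω = false
    · rw [if_pos ((hcond i).2 ⟨hi, h⟩), if_pos h]
    · rw [if_neg (fun hc => h hc.2.1), if_neg h])]
  rw [Finset.sum_boole]
  rfl

lemma tsum_g {M : ℕ} (hM : 1 ≤ M) {B : ℕ → Ω → Bool} {ω : Ω}
    (hgood : ∃ n, M ≤ S B n ω) :
    ∑' n : ℕ, (if M ≤ n ∧ S B n ω < M then (1 : ℝ≥0∞) else 0)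
      = (AjVar B (M - 1) ω : ℝ≥0∞) := by
  obtain ⟨hk1, hkS, hkmin⟩ := kj_spec hM hgood
  set k := kjVar B (M - 1) ω with hkdef
  have hcond : ∀ n : ℕ, (M ≤ n ∧ S B n ω < M) ↔ n ∈ Finset.Ico M k := by
    intro n
    simp only [Finset.mem_Ico]
    constructor
    · rintro ⟨h1, h2⟩
      refine ⟨h1, ?_⟩
      by_contra hc
      push_neg at hc
      have : S B k ω ≤ S B n ω := S_mono B ω hc
      omega
    · rintro ⟨h1, h2⟩
      exact ⟨h1, hkmin _ h2⟩
  rw [tsum_eq_sum (s := Finset.Ico M k) (fun n hn => by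
    rw [if_neg]; intro hc; exact hn ((hcond n).1 hc))]
  rw [Finset.sum_congr rfl (fun n hn => if_pos ((hcond n).2 hn)),
    Finset.sum_const, Nat.card_Ico, nsmul_eq_mul, mul_one, A_eq hM hgood]

variable {q : ℕ → ℝ} {P : Measure Ω} {B : ℕ → Ω → Bool}

lemma P_false (hB : IsBernoulliSeq q P B) (hq0 : ∀ i, 0 ≤ q i) (i : ℕ) :
    P {ω | B i ω = false} = ENNReal.ofReal (1 - q i) := by
  haveI := hB.isProb
  have hset : {ω | B i ω = false} = {ω | B i ω = true}ᶜ := by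
    ext ω; simp
  have hmeas : MeasurableSet {ω | B i ω = true} := hB.meas i (measurableSet_singleton true)
  rw [hset, measure_compl hmeas (measure_ne_top _ _), hB.law i, measure_univ,
    ENNReal.ofReal_sub 1 (hq0 i), ENNReal.ofReal_one]

lemma measurableSet_S_lt (hmeas : ∀ i, Measurable (B i)) (n M : ℕ) :
    MeasurableSet {ω | S B n ω < M} :=
  measurable_S hmeas n ((Set.to_countable {m : ℕ | m < M}).measurableSet)

/-- independence of `B i` from the event `S B (i-1) < M`. -/
lemma indep_split (hB : IsBernoulliSeq q P B) {i : ℕ} (hi : 1 ≤ i) (M : ℕ) :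
    P ({ω | B i ω = false} ∩ {ω | S B (i - 1) ω < M})
      = P {ω | B i ω = false} * P {ω | S B (i - 1) ω < M} := by
  set T : Finset ℕ := Finset.Icc 1 (i - 1) with hT
  have hd : Disjoint ({i} : Finset ℕ) T := by
    simp only [Finset.disjoint_left, Finset.mem_singleton, hT, Finset.mem_Icc]
    rintro a rfl; omega
  have hIF := hB.indep.indepFun_finset {i} T hd hB.meas
  set F : Ω → (({i} : Finset ℕ) → Bool) := fun a x => B x a with hF
  set G : Ω → (T → Bool) := fun a x => B x a with hG
  have hiF : {ω | B i ω = false} = F ⁻¹' {v | v ⟨i, Finset.mem_singleton_self i⟩ = false} := rfl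
  have hcard : ∀ ω, (Finset.univ.filter fun x : T => B (x : ℕ) ω = true).card = S B (i - 1) ω := by
    intro ω
    unfold S
    rw [Finset.univ_eq_attach, Finset.filter_attach (fun j => B j ω = true) T,
      Finset.card_map, Finset.card_attach]
  have hiG : {ω | S B (i - 1) ω < M}
      = G ⁻¹' {v | (Finset.univ.filter fun x : T => v x = true).card < M} := by
    ext ω
    simp only [Set.mem_setOf_eq, Set.mem_preimage, hG]
    rw [hcard ω]
  rw [hiF, hiG]
  exact hIF.measure_inter_preimage_eq_mul _ _ (Set.to_countable _).measurableSet
    (Set.to_countable _).measurableSet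

/-- product bound for simultaneous failures. -/
lemma P_all_false (hB : IsBernoulliSeq q P B) (hq : ∀ i, 1/2 ≤ q i)
    (s : Finset ℕ) :
    P (⋂ j ∈ s, {ω | B j ω = false}) ≤ (1 / 2 : ℝ≥0∞) ^ s.card := by
  have hsets : ∀ j, {ω | B j ω = false} = B j ⁻¹' {false} := fun j => rfl
  have hprod : P (⋂ j ∈ s, B j ⁻¹' {false}) = ∏ j ∈ s, P (B j ⁻¹' {false}) :=
    hB.indep.measure_inter_preimage_eq_mul s (fun j _ => measurableSet_singleton false)
  simp only [hsets]
  rw [hprod]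
  have hhalf : ∀ j, P (B j ⁻¹' {false}) ≤ 1 / 2 := by
    intro j
    have : P (B j ⁻¹' {false}) = ENNReal.ofReal (1 - q j) := P_false hB
      (fun i => le_trans (by norm_num) (hq i)) j
    rw [this]
    calc ENNReal.ofReal (1 - q j) ≤ ENNReal.ofReal (1 / 2 : ℝ) :=
          ENNReal.ofReal_le_ofReal (by linarith [hq j])
      _ = 1 / 2 := by
          rw [ENNReal.ofReal_div_of_pos (by norm_num), ENNReal.ofReal_one,
            ENNReal.ofReal_ofNat]
  calc ∏ j ∈ s, P (B j ⁻¹' {false}) ≤ ∏ _j ∈ s, (1 / 2 : ℝ≥0∞) :=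
        Finset.prod_le_prod' (fun j _ => hhalf j)
    _ = (1 / 2 : ℝ≥0∞) ^ s.card := by rw [Finset.prod_const]

lemma ofReal_half : ENNReal.ofReal (1 / 2 : ℝ) = 1 / 2 := by
  rw [ENNReal.ofReal_div_of_pos (by norm_num), ENNReal.ofReal_one, ENNReal.ofReal_ofNat]

lemma tail_bound (hB : IsBernoulliSeq q P B) (hq : ∀ i, 1/2 ≤ q i)
    {M n : ℕ} (hM : 1 ≤ M) (hn : 2 * M ≤ n) :
    P {ω | S B n ω < M} ≤ (n : ℝ≥0∞) ^ M * (2 ^ (2 * M) * (1 / 2) ^ n) := by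
  haveI := hB.isProb
  set r := n - (2 * M - 1) with hr
  have hsub : {ω | S B n ω < M} ⊆
      ⋃ s ∈ ↑(Finset.powersetCard r (Finset.Icc (M + 1) n)), ⋂ j ∈ s, {ω | B j ω = false} := by
    intro ω hω
    simp only [Set.mem_setOf_eq] at hω
    set F := (Finset.Icc (M + 1) n).filter fun j => B j ω = false with hF
    have htrue : ((Finset.Icc (M + 1) n).filter fun j => B j ω = true).card ≤ S B n ω :=
      Finset.card_le_card (Finset.filter_subset_filter _
        (Finset.Icc_subset_Icc (by omega) le_rfl))
    have hsplit := Finset.card_filter_add_card_filter_not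
      (s := Finset.Icc (M + 1) n) (p := fun j => B j ω = true)
    have hneg : (Finset.Icc (M + 1) n).filter (fun j => ¬ B j ω = true) = F := by
      apply Finset.filter_congr; intro j _; simp
    rw [hneg] at hsplit
    have hIcc : (Finset.Icc (M + 1) n).card = n - M := by
      rw [Nat.card_Icc]; omega
    have hFcard : r ≤ F.card := by omega
    obtain ⟨s, hs_sub, hs_card⟩ := Finset.exists_subset_card_eq hFcard
    have hs1 : s ∈ (↑(Finset.powersetCard r (Finset.Icc (M + 1) n)) : Set (Finset ℕ)) :=
      Finset.mem_coe.2
        (Finset.mem_powersetCard.2 ⟨hs_sub.trans (Finset.filter_subset _ _), hs_card⟩)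
    have hs2 : ω ∈ ⋂ j ∈ s, {ω | B j ω = false} := Set.mem_iInter₂.2 fun j hj => by
      have := hs_sub hj
      rw [hF, Finset.mem_filter] at this
      exact this.2
    exact Set.mem_biUnion hs1 hs2
  calc P {ω | S B n ω < M}
      ≤ ∑ s ∈ Finset.powersetCard r (Finset.Icc (M + 1) n), P (⋂ j ∈ s, {ω | B j ω = false}) :=
        (measure_mono hsub).trans (measure_biUnion_finset_le _ _)
    _ ≤ ∑ s ∈ Finset.powersetCard r (Finset.Icc (M + 1) n), (1 / 2 : ℝ≥0∞) ^ r := by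
        refine Finset.sum_le_sum fun s hs => ?_
        have hcard := (Finset.mem_powersetCard.1 hs).2
        simpa [hcard] using P_all_false hB hq s
    _ = ((n - M).choose r : ℝ≥0∞) * (1 / 2) ^ r := by
        rw [Finset.sum_const, Finset.card_powersetCard, Nat.card_Icc, nsmul_eq_mul,
          show n + 1 - (M + 1) = n - M by omega]
    _ ≤ (n : ℝ≥0∞) ^ M * (2 ^ (2 * M) * (1 / 2) ^ n) := by
        have hchoose : (n - M).choose r ≤ n ^ M := by
          have h1 : r = (n - M) - (M - 1) := by omega
          rw [h1, Nat.choose_symm (by omega)]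
          calc (n - M).choose (M - 1) ≤ (n - M) ^ (M - 1) := Nat.choose_le_pow _ _
            _ ≤ n ^ (M - 1) := Nat.pow_le_pow_left (by omega) _
            _ ≤ n ^ M := Nat.pow_le_pow_right (by omega) (by omega)
        have hpow : (1 / 2 : ℝ≥0∞) ^ r ≤ 2 ^ (2 * M) * (1 / 2) ^ n := by
          have h1 : (1 / 2 : ℝ≥0∞) ^ (2 * M - 1) * (1 / 2) ^ r = (1 / 2) ^ n := by
            rw [← pow_add]; congr 1; omega
          have key : ∀ a : ℕ, (2 : ℝ≥0∞) ^ (a + 1) * (1 / 2) ^ a = 2 := by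
            intro a
            rw [pow_succ, one_div, ← ENNReal.inv_pow, mul_comm ((2:ℝ≥0∞) ^ a) 2, mul_assoc,
              ENNReal.mul_inv_cancel (pow_ne_zero _ two_ne_zero)
                (ENNReal.pow_ne_top ENNReal.ofNat_ne_top), mul_one]
          have h2 : (2 : ℝ≥0∞) ^ (2 * M) * (1 / 2) ^ (2 * M - 1) = 2 := by
            have := key (2 * M - 1)
            rwa [show 2 * M - 1 + 1 = 2 * M by omega] at this
          calc (1 / 2 : ℝ≥0∞) ^ r ≤ 2 * (1 / 2) ^ r :=
                le_mul_of_one_le_left (zero_le) one_le_two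
            _ = 2 ^ (2 * M) * (1 / 2) ^ (2 * M - 1) * (1 / 2) ^ r := by rw [h2]
            _ = 2 ^ (2 * M) * (1 / 2) ^ n := by rw [mul_assoc, h1]
        calc ((n - M).choose r : ℝ≥0∞) * (1 / 2) ^ r
            ≤ (n : ℝ≥0∞) ^ M * (2 ^ (2 * M) * (1 / 2) ^ n) := by
              refine mul_le_mul' ?_ hpow
              calc ((n - M).choose r : ℝ≥0∞) ≤ ((n ^ M : ℕ) : ℝ≥0∞) := Nat.cast_le.2 hchoose
                _ = (n : ℝ≥0∞) ^ M := by push_cast; ring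

lemma tsum_S_lt_ne_top (hB : IsBernoulliSeq q P B) (hq : ∀ i, 1/2 ≤ q i)
    {M : ℕ} (hM : 1 ≤ M) :
    ∑' n : ℕ, P {ω | S B n ω < M} ≠ ⊤ := by
  haveI := hB.isProb
  have hbound : ∀ n : ℕ, P {ω | S B n ω < M} ≤
      (if n < 2 * M then (1 : ℝ≥0∞) else 0) + (n : ℝ≥0∞) ^ M * (2 ^ (2 * M) * (1 / 2) ^ n) := by
    intro n
    by_cases h : n < 2 * M
    · rw [if_pos h]
      exact le_add_of_le_of_nonneg prob_le_one (zero_le)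
    · rw [if_neg h, zero_add]
      exact tail_bound hB hq hM (by omega)
  have hterm : ∀ n : ℕ, (n : ℝ≥0∞) ^ M * (1 / 2 : ℝ≥0∞) ^ n
      = ENNReal.ofReal ((n : ℝ) ^ M * (1 / 2 : ℝ) ^ n) := by
    intro n
    rw [ENNReal.ofReal_mul (by positivity), ENNReal.ofReal_pow (by positivity),
      ENNReal.ofReal_pow (by norm_num), ENNReal.ofReal_natCast, ofReal_half]
  have hsummable : Summable (fun n : ℕ => (n : ℝ) ^ M * (1 / 2 : ℝ) ^ n) :=
    summable_pow_mul_geometric_of_norm_lt_one M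
      (by rw [Real.norm_eq_abs, abs_of_pos] <;> norm_num)
  have hw : ∑' n : ℕ, (n : ℝ≥0∞) ^ M * (1 / 2 : ℝ≥0∞) ^ n ≠ ⊤ := by
    simp_rw [hterm]
    rw [← ENNReal.ofReal_tsum_of_nonneg (fun n => by positivity) hsummable]
    exact ENNReal.ofReal_ne_top
  have hv : ∑' n : ℕ, (if n < 2 * M then (1 : ℝ≥0∞) else 0) ≠ ⊤ := by
    rw [tsum_eq_sum (s := Finset.range (2 * M)) (fun n hn => by
      rw [if_neg]; simpa using hn)]
    exact (ENNReal.sum_lt_top.2 fun _ _ => by split <;> simp).ne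
  refine ne_top_of_le_ne_top ?_ (ENNReal.tsum_le_tsum hbound)
  rw [ENNReal.tsum_add]
  refine ENNReal.add_ne_top.2 ⟨hv, ?_⟩
  have : ∀ n : ℕ, (n : ℝ≥0∞) ^ M * (2 ^ (2 * M) * (1 / 2) ^ n)
      = 2 ^ (2 * M) * ((n : ℝ≥0∞) ^ M * (1 / 2) ^ n) := fun n => by ring
  simp_rw [this]
  rw [ENNReal.tsum_mul_left]
  exact ENNReal.mul_ne_top (ENNReal.pow_ne_top ENNReal.ofNat_ne_top) hw

lemma tsum_split (g : ℕ → ℝ≥0∞) (k : ℕ) :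
    ∑' i, g i = (∑ i ∈ Finset.range k, g i) + ∑' i, g (i + k) := by
  have h1 : ∑' i, g i = ∑' i, ((if i < k then g i else 0) + (if k ≤ i then g i else 0)) := by
    apply tsum_congr; intro i; by_cases h : i < k
    · rw [if_pos h, if_neg (by omega), add_zero]
    · rw [if_neg h, if_pos (by omega), zero_add]
  rw [h1, ENNReal.tsum_add]
  congr 1
  · rw [tsum_eq_sum (s := Finset.range k) (fun i hi => if_neg (by simpa using hi))]
    exact Finset.sum_congr rfl fun i hi => if_pos (Finset.mem_range.1 hi)
  · have hinj : Function.Injective (fun i : ℕ => i + k) := fun a b h => by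
      simpa using h
    have hsupp : Function.support (fun i => if k ≤ i then g i else 0)
        ⊆ Set.range (fun i : ℕ => i + k) := by
      intro i hi
      by_cases h : k ≤ i
      · exact ⟨i - k, by simp; omega⟩
      · simp [Function.mem_support, if_neg h] at hi
    have hre := hinj.tsum_eq (f := fun i => if k ≤ i then g i else 0) hsupp
    rw [← hre]
    apply tsum_congr; intro i
    exact if_pos (by omega)

lemma bad_null (hB : IsBernoulliSeq q P B) (hq : ∀ i, 1/2 ≤ q i)
    {M : ℕ} (hM : 1 ≤ M) :
    P {ω | ¬ ∃ n, M ≤ S B n ω} = 0 := by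
  have hsub : ∀ n : ℕ, {ω | ¬ ∃ n, M ≤ S B n ω} ⊆ {ω | S B n ω < M} := by
    intro n ω hω
    push_neg at hω
    exact hω n
  have htend := ENNReal.tendsto_atTop_zero_of_tsum_ne_top (tsum_S_lt_ne_top hB hq hM)
  have hle : P {ω | ¬ ∃ n, M ≤ S B n ω} ≤ 0 :=
    ge_of_tendsto' htend fun n => measure_mono (hsub n)
  exact le_antisymm hle (zero_le)

end CookieLemma33

set_option maxHeartbeats 2000000 in
open CookieLemma33 in
/-- **Lemma 3.3.** `E[A_{M-1}] = 2 Σ_{i=1}^M (1 − p_i)`. -/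
theorem expectation_A_M_sub_one
    (M : ℕ) (hM : 1 ≤ M) (p : Fin M → ℝ) (hp : ∀ i, 1 / 2 ≤ p i ∧ p i < 1)
    {Ω : Type*} [MeasurableSpace Ω] (P : Measure Ω) (B : ℕ → Ω → Bool)
    (hB : IsBernoulliSeq (strength M p) P B) :
    ∫⁻ ω, (AjVar B (M - 1) ω : ℝ≥0∞) ∂P
      = ENNReal.ofReal (2 * ∑ i, (1 - p i)) := by
  haveI := hB.isProb
  -- basic facts about the strengths
  have hq_half : ∀ i, 1 / 2 ≤ strength M p i := by
    intro i
    rw [strength]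
    split_ifs with h
    · exact (hp _).1
    · exact le_rfl
  have hq_le1 : ∀ i, strength M p i ≤ 1 := by
    intro i
    rw [strength]
    split_ifs with h
    · exact le_of_lt (hp _).2
    · norm_num
  have hq_tail : ∀ i, M + 1 ≤ i → strength M p i = 1 / 2 := by
    intro i hi
    rw [strength, dif_neg (by omega)]
  have hq_in : ∀ j : ℕ, (hj : j < M) → strength M p (j + 1) = p ⟨j, hj⟩ := by
    intro j hj
    rw [strength, dif_pos ⟨by omega, by omega⟩]
    congr
  -- good event is a.e.
  have hgood_ae : ∀ᵐ ω ∂P, ∃ n, M ≤ S B n ω :=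
    ae_iff.mpr (bad_null hB hq_half hM)
  -- the sets
  set D1 : ℕ → Set Ω := fun i => {ω | 1 ≤ i ∧ B i ω = false ∧ S B (i - 1) ω < M} with hD1def
  set D2 : ℕ → Set Ω := fun n => {ω | M ≤ n ∧ S B n ω < M} with hD2def
  have hD1 : ∀ i, MeasurableSet (D1 i) := by
    intro i
    by_cases hi : 1 ≤ i
    · have : D1 i = {ω | B i ω = false} ∩ {ω | S B (i - 1) ω < M} := by
        ext ω; simp [hD1def, hi]
      rw [this]
      exact (hB.meas i (measurableSet_singleton false)).inter
        (measurableSet_S_lt hB.meas (i - 1) M)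
    · have : D1 i = ∅ := by
        ext ω; simp [hD1def, hi]
      rw [this]; exact MeasurableSet.empty
  have hD2 : ∀ n, MeasurableSet (D2 n) := by
    intro n
    by_cases hn : M ≤ n
    · have : D2 n = {ω | S B n ω < M} := by
        ext ω; simp [hD2def, hn]
      rw [this]; exact measurableSet_S_lt hB.meas n M
    · have : D2 n = ∅ := by
        ext ω; simp [hD2def, hn]
      rw [this]; exact MeasurableSet.empty
  -- two representations of the expectation
  have key1 : ∫⁻ ω, (AjVar B (M - 1) ω : ℝ≥0∞) ∂P = ∑' i, P (D1 i) := by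
    have hae : ∀ᵐ ω ∂P, (AjVar B (M - 1) ω : ℝ≥0∞)
        = ∑' i, (D1 i).indicator (fun _ => (1 : ℝ≥0∞)) ω := by
      filter_upwards [hgood_ae] with ω hgood
      rw [← tsum_f hM hgood]
      exact tsum_congr fun i => by
        simp [Set.indicator_apply, hD1def, Set.mem_setOf_eq]
    rw [lintegral_congr_ae hae,
      lintegral_tsum (fun i => (measurable_const.indicator (hD1 i)).aemeasurable)]
    exact tsum_congr fun i => lintegral_indicator_one (hD1 i)
  have key2 : ∫⁻ ω, (AjVar B (M - 1) ω : ℝ≥0∞) ∂P = ∑' n, P (D2 n) := by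
    have hae : ∀ᵐ ω ∂P, (AjVar B (M - 1) ω : ℝ≥0∞)
        = ∑' n, (D2 n).indicator (fun _ => (1 : ℝ≥0∞)) ω := by
      filter_upwards [hgood_ae] with ω hgood
      rw [← tsum_g hM hgood]
      exact tsum_congr fun n => by
        simp [Set.indicator_apply, hD2def, Set.mem_setOf_eq]
    rw [lintegral_congr_ae hae,
      lintegral_tsum (fun n => (measurable_const.indicator (hD2 n)).aemeasurable)]
    exact tsum_congr fun n => lintegral_indicator_one (hD2 n)
  set E := ∫⁻ ω, (AjVar B (M - 1) ω : ℝ≥0∞) ∂P with hE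
  -- finiteness
  have hE_fin : E ≠ ⊤ := by
    rw [key2]
    refine ne_top_of_le_ne_top (tsum_S_lt_ne_top hB hq_half hM) (ENNReal.tsum_le_tsum fun n => ?_)
    refine measure_mono fun ω hω => ?_
    exact hω.2
  -- evaluate P (D1 i)
  have hPD1 : ∀ i, 1 ≤ i → P (D1 i)
      = ENNReal.ofReal (1 - strength M p i) * P {ω | S B (i - 1) ω < M} := by
    intro i hi
    have hset : D1 i = {ω | B i ω = false} ∩ {ω | S B (i - 1) ω < M} := by
      ext ω; simp [hD1def, hi]
    rw [hset, indep_split hB hi M, P_false hB (fun j => le_trans (by norm_num) (hq_half j)) i]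
  have hPD1_in : ∀ j : ℕ, j < M → P (D1 (j + 1)) = ENNReal.ofReal (1 - strength M p (j + 1)) := by
    intro j hj
    have huniv : {ω : Ω | S B (j + 1 - 1) ω < M} = Set.univ := by
      ext ω
      simp only [Set.mem_setOf_eq, Set.mem_univ, iff_true]
      have := S_le B (j + 1 - 1) ω
      omega
    rw [hPD1 (j + 1) (by omega), huniv, measure_univ, mul_one]
  have hPD1_tail : ∀ i : ℕ, M + 1 ≤ i →
      P (D1 i) = 1 / 2 * P {ω | S B (i - 1) ω < M} := by
    intro i hi
    rw [hPD1 i (by omega), hq_tail i hi]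
    norm_num [ofReal_half]
  -- the main identity: E = C + (1/2) * E
  set C := ∑ i : Fin M, ENNReal.ofReal (1 - p i) with hC
  have heq : E = C + 1 / 2 * E := by
    have hsplit1 : ∑' i, P (D1 i)
        = (∑ i ∈ Finset.range (M + 1), P (D1 i)) + ∑' i, P (D1 (i + (M + 1))) :=
      tsum_split (fun i => P (D1 i)) (M + 1)
    have hfirst : ∑ i ∈ Finset.range (M + 1), P (D1 i) = C := by
      rw [Finset.sum_range_succ']
      have h0 : P (D1 0) = 0 := by
        have : D1 0 = ∅ := by ext ω; simp [hD1def]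
        rw [this]; exact measure_empty
      rw [h0, add_zero,
        Finset.sum_congr rfl (fun j hj => hPD1_in j (Finset.mem_range.1 hj)), hC,
        ← Fin.sum_univ_eq_sum_range (fun j => ENNReal.ofReal (1 - strength M p (j + 1))) M]
      refine Finset.sum_congr rfl fun i _ => ?_
      rw [hq_in (i : ℕ) i.isLt]
    have htail : ∑' i, P (D1 (i + (M + 1))) = 1 / 2 * ∑' n, P (D2 n) := by
      have h1 : ∀ i : ℕ, P (D1 (i + (M + 1))) = 1 / 2 * P {ω | S B (i + M) ω < M} := by
        intro i
        rw [hPD1_tail (i + (M + 1)) (by omega)]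
        congr 2
      have h2 : ∑' n, P (D2 n) = ∑' n, P (D2 (n + M)) := by
        rw [tsum_split (fun n => P (D2 n)) M]
        have : ∀ n ∈ Finset.range M, P (D2 n) = 0 := by
          intro n hn
          have : D2 n = ∅ := by
            ext ω; simp only [hD2def, Set.mem_setOf_eq, Set.mem_empty_iff_false, iff_false]
            rintro ⟨h, _⟩
            simp at hn
            omega
          rw [this]; exact measure_empty
        rw [Finset.sum_congr rfl this, Finset.sum_const, smul_zero, zero_add]
      have h3 : ∀ n : ℕ, P (D2 (n + M)) = P {ω | S B (n + M) ω < M} := by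
        intro n
        congr 1
        ext ω; simp [hD2def]
      simp_rw [h1, h2, h3]
      rw [ENNReal.tsum_mul_left]
    have heq2 : ∑' i, P (D1 i) = C + 1 / 2 * ∑' n, P (D2 n) := by
      rw [hsplit1, hfirst, htail]
    conv_lhs => rw [key1, heq2]
    rw [← key2]
  -- solve the equation
  have hhalfE : 1 / 2 * E ≠ ⊤ :=
    ENNReal.mul_ne_top (by norm_num) hE_fin
  have hEC : E = C + C := by
    have h1 : 1 / 2 * E + 1 / 2 * E = E := by
      rw [← add_mul, show (1 / 2 + 1 / 2 : ℝ≥0∞) = 1 from ENNReal.add_halves 1, one_mul]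
    have h2 : 1 / 2 * E + 1 / 2 * E = C + 1 / 2 * E := by
      conv_lhs => rw [h1, heq]
    have h3 : 1 / 2 * E = C := (ENNReal.add_left_inj hhalfE).1 h2
    rw [← h1, h3]
  -- final computation
  have hsum_nonneg : ∀ i : Fin M, (0 : ℝ) ≤ 1 - p i := fun i => by
    have := (hp i).2; linarith
  have hCval : C = ENNReal.ofReal (∑ i, (1 - p i)) := by
    rw [hC, ← ENNReal.ofReal_sum_of_nonneg (fun i _ => hsum_nonneg i)]
  rw [hEC, hCval, ← ENNReal.ofReal_add (Finset.sum_nonneg fun i _ => hsum_nonneg i)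
    (Finset.sum_nonneg fun i _ => hsum_nonneg i)]
  congr 1
  ring

end
end

section
/- For every integer j ≥ 1, P{A_{M−1} = j} = Σ_{l=1}^{M∧j} P{L = l} · C(j−1, l−1) · (1/2)^j, where L = #{1 ≤ i ≤ M : B_i = 0} and C(j−1, l−1) denotes the binomial coefficient. -/
set_option linter.unusedSectionVars false


open MeasureTheory ProbabilityTheory Filter Finset Topology Asymptotics
open scoped ENNReal NNReal

noncomputable section

namespace CookieAux

variable {Ω : Type*} [MeasurableSpace Ω] {P : Measure Ω} {B : ℕ → Ω → Bool}

/-- The atom event: successes on `s` are exactly the elements of `t`. -/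
def atomEv (B : ℕ → Ω → Bool) (s t : Finset ℕ) : Set Ω :=
  {ω | ∀ i ∈ s, B i ω = decide (i ∈ t)}

lemma atomEv_eq_iInter (s t : Finset ℕ) :
    atomEv B s t = ⋂ i ∈ s, B i ⁻¹' {decide (i ∈ t)} := by
  ext ω; simp [atomEv]

lemma measurableSet_atomEv (hmeas : ∀ i, Measurable (B i)) (s t : Finset ℕ) :
    MeasurableSet (atomEv B s t) := by
  rw [atomEv_eq_iInter]
  exact MeasurableSet.biInter (s : Set ℕ).to_countable
    fun i _ => (hmeas i) (measurableSet_singleton _)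

lemma prob_atomEv (hind : iIndepFun B P) (s t : Finset ℕ) :
    P (atomEv B s t) = ∏ i ∈ s, P {ω | B i ω = decide (i ∈ t)} := by
  rw [atomEv_eq_iInter]
  have := hind.measure_inter_preimage_eq_mul (sets := fun i => {decide (i ∈ t)}) s
    (fun i _ => measurableSet_singleton _)
  rw [this]
  rfl

lemma disjoint_atomEv {s t t' : Finset ℕ} (ht : t ⊆ s) (ht' : t' ⊆ s) (hne : t ≠ t') :
    Disjoint (atomEv B s t) (atomEv B s t') := by
  rw [Set.disjoint_left]
  intro ω h1 h2
  apply hne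
  ext i
  by_cases his : i ∈ s
  · have h := (h1 i his).symm.trans (h2 i his)
    simpa [decide_eq_decide] using h
  · constructor <;> intro h
    · exact absurd (ht h) his
    · exact absurd (ht' h) his

lemma mem_atomEv_self (ω : Ω) (s : Finset ℕ) :
    ω ∈ atomEv B s (s.filter fun i => B i ω = true) := by
  intro i hi
  by_cases h : B i ω = true <;> simp [Finset.mem_filter, hi, h]

lemma filter_true_of_mem_atomEv {ω : Ω} {s t : Finset ℕ} (ht : t ⊆ s)
    (hω : ω ∈ atomEv B s t) : (s.filter fun i => B i ω = true) = t := by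
  ext i
  simp only [Finset.mem_filter]
  constructor
  · rintro ⟨his, hbi⟩
    have := hω i his
    rw [hbi] at this
    simpa using this.symm
  · intro hit
    refine ⟨ht hit, ?_⟩
    rw [hω i (ht hit)]
    simp [hit]

lemma filter_false_of_mem_atomEv {ω : Ω} {s t : Finset ℕ} (ht : t ⊆ s)
    (hω : ω ∈ atomEv B s t) : (s.filter fun i => B i ω = false) = s \ t := by
  have h1 := filter_true_of_mem_atomEv ht hω
  have : (s.filter fun i => B i ω = false) = s \ (s.filter fun i => B i ω = true) := by
    rw [← Finset.filter_not]
    apply Finset.filter_congr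
    intro i _
    simp
  rw [this, h1]


lemma countFalseEv_eq_biUnion (s : Finset ℕ) (l : ℕ) :
    {ω | (s.filter fun i => B i ω = false).card = l}
      = ⋃ t ∈ s.powerset.filter fun t => (s \ t).card = l, atomEv B s t := by
  ext ω
  simp only [Set.mem_setOf_eq, Set.mem_iUnion, exists_prop, Finset.mem_filter,
    Finset.mem_powerset]
  constructor
  · intro h
    refine ⟨s.filter fun i => B i ω = true, ⟨Finset.filter_subset _ _, ?_⟩,
      mem_atomEv_self ω s⟩
    rw [← filter_false_of_mem_atomEv (Finset.filter_subset _ _) (mem_atomEv_self ω s)]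
    exact h
  · rintro ⟨t, ⟨hts, hcard⟩, hω⟩
    rw [filter_false_of_mem_atomEv hts hω]
    exact hcard

lemma atomEv_inter_atomEv {s1 s2 t1 t2 : Finset ℕ} (hdisj : Disjoint s1 s2)
    (ht1 : t1 ⊆ s1) (ht2 : t2 ⊆ s2) :
    atomEv B s1 t1 ∩ atomEv B s2 t2 = atomEv B (s1 ∪ s2) (t1 ∪ t2) := by
  have key1 : ∀ i ∈ s1, (decide (i ∈ t1 ∪ t2)) = decide (i ∈ t1) := by
    intro i hi
    have : i ∉ t2 := fun h => (Finset.disjoint_left.mp hdisj hi) (ht2 h)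
    simp [Finset.mem_union, this]
  have key2 : ∀ i ∈ s2, (decide (i ∈ t1 ∪ t2)) = decide (i ∈ t2) := by
    intro i hi
    have : i ∉ t1 := fun h => (Finset.disjoint_right.mp hdisj hi) (ht1 h)
    simp [Finset.mem_union, this]
  ext ω
  simp only [Set.mem_inter_iff, atomEv, Set.mem_setOf_eq]
  constructor
  · rintro ⟨h1, h2⟩ i hi
    rcases Finset.mem_union.mp hi with hi1 | hi2
    · rw [key1 i hi1]; exact h1 i hi1
    · rw [key2 i hi2]; exact h2 i hi2
  · intro h
    constructor
    · intro i hi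
      rw [← key1 i hi]; exact h i (Finset.mem_union_left _ hi)
    · intro i hi
      rw [← key2 i hi]; exact h i (Finset.mem_union_right _ hi)

lemma prob_atomEv_inter (hind : iIndepFun B P)
    {s1 s2 t1 t2 : Finset ℕ} (hdisj : Disjoint s1 s2) (ht1 : t1 ⊆ s1) (ht2 : t2 ⊆ s2) :
    P (atomEv B s1 t1 ∩ atomEv B s2 t2) = P (atomEv B s1 t1) * P (atomEv B s2 t2) := by
  rw [atomEv_inter_atomEv hdisj ht1 ht2, prob_atomEv hind, prob_atomEv hind,
    prob_atomEv hind, Finset.prod_union hdisj]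
  congr 1
  · refine Finset.prod_congr rfl fun i hi => ?_
    have : i ∉ t2 := fun h => (Finset.disjoint_left.mp hdisj hi) (ht2 h)
    congr 1
    ext ω
    simp [Finset.mem_union, this]
  · refine Finset.prod_congr rfl fun i hi => ?_
    have : i ∉ t1 := fun h => (Finset.disjoint_right.mp hdisj hi) (ht1 h)
    congr 1
    ext ω
    simp [Finset.mem_union, this]

lemma prob_biUnion_atomEv (hmeas : ∀ i, Measurable (B i))
    (hind : iIndepFun B P)
    {s : Finset ℕ} {T : Finset (Finset ℕ)} (hT : ∀ t ∈ T, t ⊆ s) :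
    P (⋃ t ∈ T, atomEv B s t) = ∑ t ∈ T, P (atomEv B s t) := by
  refine measure_biUnion_finset ?_ fun t _ => measurableSet_atomEv hmeas s t
  intro t1 h1 t2 h2 hne
  exact disjoint_atomEv (hT t1 h1) (hT t2 h2) hne

lemma prob_inter_biUnion_atomEv (hmeas : ∀ i, Measurable (B i))
    (hind : iIndepFun B P)
    {s1 s2 : Finset ℕ} (hdisj : Disjoint s1 s2) {T1 T2 : Finset (Finset ℕ)}
    (hT1 : ∀ t ∈ T1, t ⊆ s1) (hT2 : ∀ t ∈ T2, t ⊆ s2) :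
    P ((⋃ t ∈ T1, atomEv B s1 t) ∩ ⋃ t ∈ T2, atomEv B s2 t)
      = P (⋃ t ∈ T1, atomEv B s1 t) * P (⋃ t ∈ T2, atomEv B s2 t) := by
  have hset : ((⋃ t ∈ T1, atomEv B s1 t) ∩ ⋃ t ∈ T2, atomEv B s2 t)
      = ⋃ p ∈ T1 ×ˢ T2, (atomEv B s1 p.1 ∩ atomEv B s2 p.2) := by
    ext ω
    simp only [Set.mem_inter_iff, Set.mem_iUnion, exists_prop, Finset.mem_product]
    constructor
    · rintro ⟨⟨t1, ht1, h1⟩, ⟨t2, ht2, h2⟩⟩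
      exact ⟨(t1, t2), ⟨ht1, ht2⟩, h1, h2⟩
    · rintro ⟨p, ⟨hp1, hp2⟩, h1, h2⟩
      exact ⟨⟨p.1, hp1, h1⟩, ⟨p.2, hp2, h2⟩⟩
  rw [hset]
  rw [measure_biUnion_finset ?_ fun p _ =>
    ((measurableSet_atomEv hmeas s1 p.1).inter (measurableSet_atomEv hmeas s2 p.2))]
  · rw [prob_biUnion_atomEv hmeas hind hT1, prob_biUnion_atomEv hmeas hind hT2,
      Finset.sum_mul_sum, Finset.sum_product]
    refine Finset.sum_congr rfl fun t1 ht1 => Finset.sum_congr rfl fun t2 ht2 => ?_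
    exact prob_atomEv_inter hind hdisj (hT1 t1 ht1) (hT2 t2 ht2)
  · intro p hp q hq hne
    simp only [Finset.mem_coe, Finset.mem_product] at hp hq
    have hor : p.1 ≠ q.1 ∨ p.2 ≠ q.2 := by
      by_contra h
      push_neg at h
      exact hne (Prod.ext h.1 h.2)
    rcases hor with h | h
    · exact Disjoint.mono Set.inter_subset_left Set.inter_subset_left
        (disjoint_atomEv (hT1 _ hp.1) (hT1 _ hq.1) h)
    · exact Disjoint.mono Set.inter_subset_right Set.inter_subset_right
        (disjoint_atomEv (hT2 _ hp.2) (hT2 _ hq.2) h)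


lemma eq_decide_of_iff {b : Bool} {q : Prop} [Decidable q] (h : q ↔ b = true) :
    b = decide q := by
  cases b
  · have : ¬ q := by simp [h]
    simp [this]
  · have : q := h.mpr rfl
    simp [this]

lemma count_Icc_succ (b : ℕ → Bool) (k : ℕ) :
    ((Icc 1 (k+1)).filter fun i => b i = true).card
      = ((Icc 1 k).filter fun i => b i = true).card + (if b (k+1) = true then 1 else 0) := by
  have h : Icc 1 (k+1) = insert (k+1) (Icc 1 k) := by
    ext i; simp only [Finset.mem_Icc, Finset.mem_insert]; omega
  rw [h, Finset.filter_insert]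
  by_cases hb : b (k+1) = true
  · rw [if_pos hb, if_pos hb, Finset.card_insert_of_notMem]
    intro hmem
    rw [Finset.mem_filter, Finset.mem_Icc] at hmem
    omega
  · rw [if_neg hb, if_neg hb]
    omega

lemma stepA (b : ℕ → Bool) {M j : ℕ} (hM : 1 ≤ M) (hj : 1 ≤ j) :
    ((Icc 1 (sInf {k | 1 ≤ k ∧ ((Icc 1 k).filter fun i => b i = true).card = M})).filter
        fun i => b i = false).card = j
      ↔ b (M + j) = true ∧ ((Icc 1 (M + j - 1)).filter fun i => b i = true).card = M - 1 := by
  set f : ℕ → ℕ := fun k => ((Icc 1 k).filter fun i => b i = true).card with hf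
  set g : ℕ → ℕ := fun k => ((Icc 1 k).filter fun i => b i = false).card with hg
  have hfg : ∀ k, f k + g k = k := by
    intro k
    have h1 := Finset.card_filter_add_card_filter_not
      (s := Icc 1 k) (p := fun i => b i = true)
    have h2 : (Icc 1 k).filter (fun i => ¬ b i = true)
        = (Icc 1 k).filter (fun i => b i = false) :=
      Finset.filter_congr fun i _ => by simp
    rw [h2, Nat.card_Icc] at h1
    simp only [hf, hg]
    omega
  have hmono : Monotone f := fun k k' h =>
    Finset.card_le_card (Finset.filter_subset_filter _ (Finset.Icc_subset_Icc le_rfl h))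
  set S := {k | 1 ≤ k ∧ f k = M} with hS
  have hsuccf : f (M+j) = f (M+j-1) + (if b (M+j) = true then 1 else 0) := by
    have h1 : M + j = (M + j - 1) + 1 := by omega
    rw [h1]
    exact count_Icc_succ b _
  constructor
  · intro hA
    rcases Set.eq_empty_or_nonempty S with hempty | hne
    · exfalso
      have h0 : sInf S = 0 := by rw [hempty]; exact Nat.sInf_empty
      have hA' : g (sInf S) = j := hA
      rw [h0] at hA'
      have := hfg 0
      omega
    · have hkmem := Nat.sInf_mem hne
      obtain ⟨hk1, hkM⟩ := hkmem
      have hgk : g (sInf S) = j := hA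
      have hk : sInf S = M + j := by have := hfg (sInf S); omega
      have hbtrue : b (M + j) = true := by
        by_contra hb
        have h0 : f (M+j) = f (M+j-1) := by rw [hsuccf, if_neg hb]; omega
        have hmem : (M+j-1) ∈ S := ⟨by omega, by rw [← h0, ← hk]; exact hkM⟩
        have := Nat.sInf_le hmem
        omega
      refine ⟨hbtrue, ?_⟩
      show f (M + j - 1) = M - 1
      have h1 : f (M+j) = f (M+j-1) + 1 := by rw [hsuccf, if_pos hbtrue]
      have hfMj : f (M+j) = M := by rw [← hk]; exact hkM
      omega
  · rintro ⟨hbtrue, hcount⟩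
    have hfMj1 : f (M+j-1) = M - 1 := hcount
    have hfMj : f (M+j) = M := by rw [hsuccf, if_pos hbtrue]; omega
    have hmem : M + j ∈ S := ⟨by omega, hfMj⟩
    have hinf : sInf S = M + j := by
      refine le_antisymm (Nat.sInf_le hmem) ?_
      obtain ⟨h1, h2⟩ := Nat.sInf_mem ⟨M+j, hmem⟩
      by_contra hlt
      push_neg at hlt
      have : f (sInf S) ≤ f (M+j-1) := hmono (by omega)
      omega
    show g (sInf S) = j
    rw [hinf]
    have := hfg (M+j)
    omega

lemma D_eq_biUnion (M j l : ℕ) (hj : 1 ≤ j) :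
    {ω | B (M+j) ω = true ∧ ((Ico (M+1) (M+j)).filter fun i => B i ω = true).card = l - 1}
      = ⋃ t ∈ ((Ico (M+1) (M+j)).powersetCard (l-1)).image (insert (M+j)),
          atomEv B (Icc (M+1) (M+j)) t := by
  ext ω
  simp only [Set.mem_setOf_eq, Set.mem_iUnion, exists_prop, Finset.mem_image,
    Finset.mem_powersetCard]
  constructor
  · rintro ⟨hb, hcard⟩
    refine ⟨insert (M+j) ((Ico (M+1) (M+j)).filter fun i => B i ω = true),
      ⟨_, ⟨Finset.filter_subset _ _, hcard⟩, rfl⟩, ?_⟩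
    intro i hi
    rw [Finset.mem_Icc] at hi
    apply eq_decide_of_iff
    by_cases hij : i = M + j
    · subst hij
      simp [hb]
    · have hiIco : i ∈ Ico (M+1) (M+j) := by rw [Finset.mem_Ico]; omega
      simp only [Finset.mem_insert, Finset.mem_filter]
      constructor
      · rintro (h | ⟨_, h⟩)
        · exact absurd h hij
        · exact h
      · intro h
        exact Or.inr ⟨hiIco, h⟩
  · rintro ⟨t, ⟨u, ⟨hu, hucard⟩, rfl⟩, hω⟩
    have hMj : M + j ∈ Icc (M+1) (M+j) := by rw [Finset.mem_Icc]; omega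
    have hb : B (M+j) ω = true := by
      have h := hω (M+j) hMj
      simpa using h
    refine ⟨hb, ?_⟩
    have hfil : (Ico (M+1) (M+j)).filter (fun i => B i ω = true) = u := by
      ext i
      simp only [Finset.mem_filter]
      constructor
      · rintro ⟨hi, hbi⟩
        have h := hω i (Finset.Ico_subset_Icc_self hi)
        rw [hbi] at h
        have h2 : i ∈ insert (M+j) u := by simpa using h.symm
        rcases Finset.mem_insert.mp h2 with h3 | h3
        · exfalso; rw [Finset.mem_Ico] at hi; omega
        · exact h3
      · intro hiu
        have hi : i ∈ Ico (M+1) (M+j) := hu hiu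
        refine ⟨hi, ?_⟩
        rw [hω i (Finset.Ico_subset_Icc_self hi)]
        simp [hiu]
    rw [hfil, hucard]

lemma card_T2 (M j l : ℕ) :
    (((Ico (M+1) (M+j)).powersetCard (l-1)).image (insert (M+j))).card
      = (j-1).choose (l-1) := by
  rw [Finset.card_image_of_injOn, Finset.card_powersetCard, Nat.card_Ico]
  · congr 1
    omega
  · intro u hu u' hu' heq
    rw [Finset.mem_coe, Finset.mem_powersetCard] at hu hu'
    have hnu : (M+j) ∉ u := fun h => by
      have := hu.1 h
      rw [Finset.mem_Ico] at this
      omega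
    have hnu' : (M+j) ∉ u' := fun h => by
      have := hu'.1 h
      rw [Finset.mem_Ico] at this
      omega
    rw [← Finset.erase_insert hnu, ← Finset.erase_insert hnu', heq]


lemma prob_true_fair {M : ℕ} {p : Fin M → ℝ} (hB : IsBernoulliSeq (strength M p) P B)
    {i : ℕ} (hi : M < i) : P {ω | B i ω = true} = 2⁻¹ := by
  rw [hB.law i]
  have hs : strength M p i = 1 / 2 := by
    simp only [strength]
    rw [dif_neg]
    omega
  rw [hs, show (1:ℝ)/2 = (2:ℝ)⁻¹ by norm_num,
    ENNReal.ofReal_inv_of_pos (by norm_num)]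
  norm_num

lemma prob_fair {M : ℕ} {p : Fin M → ℝ} (hB : IsBernoulliSeq (strength M p) P B)
    {i : ℕ} (hi : M < i) (c : Bool) : P {ω | B i ω = c} = 2⁻¹ := by
  haveI := hB.isProb
  cases c
  · have hc : {ω | B i ω = false} = {ω | B i ω = true}ᶜ := by
      ext ω
      simp
    rw [hc, prob_compl_eq_one_sub (s := {ω | B i ω = true}) ((hB.meas i) (measurableSet_singleton true)),
      prob_true_fair hB hi, ENNReal.one_sub_inv_two]
  · exact prob_true_fair hB hi

end CookieAux

open CookieAux

/-- For every `j ≥ 1`,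
`P{A_{M-1} = j} = Σ_{l=1}^{M ∧ j} P{L = l} C(j-1, l-1) (1/2)^j`, where
`L = #{1 ≤ i ≤ M : B_i = 0}`. -/
theorem A_M_sub_one_point_law
    (M : ℕ) (hM : 1 ≤ M) (p : Fin M → ℝ) (hp : ∀ i, 1 / 2 ≤ p i ∧ p i < 1)
    {Ω : Type*} [MeasurableSpace Ω] (P : Measure Ω) (B : ℕ → Ω → Bool)
    (hB : IsBernoulliSeq (strength M p) P B) (j : ℕ) (hj : 1 ≤ j) :
    P {ω | AjVar B (M - 1) ω = j}
      = ∑ l ∈ Finset.Icc 1 (min M j),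
          P {ω | ((Finset.Icc 1 M).filter fun i => B i ω = false).card = l}
            * ((j - 1).choose (l - 1) : ℝ≥0∞) * (2⁻¹ : ℝ≥0∞) ^ j := by
  classical
  haveI := hB.isProb
  -- index sets
  have hdisj12 : Disjoint (Finset.Icc 1 M) (Finset.Icc (M+1) (M+j)) := by
    rw [Finset.disjoint_left]
    intro a ha hb
    rw [Finset.mem_Icc] at ha hb
    omega
  have hT1 : ∀ l, ∀ t ∈ (Finset.Icc 1 M).powerset.filter
      fun t => ((Finset.Icc 1 M) \ t).card = l, t ⊆ Finset.Icc 1 M := by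
    intro l t ht
    exact Finset.mem_powerset.mp (Finset.mem_filter.mp ht).1
  have hT2 : ∀ l, ∀ t ∈ ((Finset.Ico (M+1) (M+j)).powersetCard (l-1)).image
      (insert (M+j)), t ⊆ Finset.Icc (M+1) (M+j) := by
    intro l t ht
    obtain ⟨u, hu, rfl⟩ := Finset.mem_image.mp ht
    rw [Finset.mem_powersetCard] at hu
    refine Finset.insert_subset (by rw [Finset.mem_Icc]; omega)
      (hu.1.trans (Finset.Ico_subset_Icc_self))
  -- the events are measurable
  have hFmeas : ∀ l : ℕ, MeasurableSet
      {ω | ((Finset.Icc 1 M).filter fun i => B i ω = false).card = l} := by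
    intro l
    rw [countFalseEv_eq_biUnion]
    exact Set.Finite.measurableSet_biUnion (Finset.finite_toSet _)
      fun t _ => measurableSet_atomEv hB.meas _ t
  have hDmeas : ∀ l : ℕ, MeasurableSet
      {ω | B (M+j) ω = true ∧
        ((Finset.Ico (M+1) (M+j)).filter fun i => B i ω = true).card = l - 1} := by
    intro l
    rw [D_eq_biUnion M j l hj]
    exact Set.Finite.measurableSet_biUnion (Finset.finite_toSet _)
      fun t _ => measurableSet_atomEv hB.meas _ t
  -- counting helpers
  have hsplit : Finset.Icc 1 (M+j-1) = Finset.Icc 1 M ∪ Finset.Ico (M+1) (M+j) := by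
    ext i
    simp only [Finset.mem_Icc, Finset.mem_union, Finset.mem_Ico]
    omega
  have hdisj12' : Disjoint (Finset.Icc 1 M) (Finset.Ico (M+1) (M+j)) := by
    rw [Finset.disjoint_left]
    intro a ha hb
    rw [Finset.mem_Icc] at ha
    rw [Finset.mem_Ico] at hb
    omega
  have hcount : ∀ ω : Ω, ((Finset.Icc 1 (M+j-1)).filter fun i => B i ω = true).card
      = ((Finset.Icc 1 M).filter fun i => B i ω = true).card
        + ((Finset.Ico (M+1) (M+j)).filter fun i => B i ω = true).card := by
    intro ω
    rw [hsplit, Finset.filter_union, Finset.card_union_of_disjoint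
      (Finset.disjoint_filter_filter hdisj12')]
  have hc1 : ∀ ω : Ω, ((Finset.Icc 1 M).filter fun i => B i ω = true).card
      + ((Finset.Icc 1 M).filter fun i => B i ω = false).card = M := by
    intro ω
    have h1 := Finset.card_filter_add_card_filter_not
      (s := Finset.Icc 1 M) (p := fun i => B i ω = true)
    have h2 : (Finset.Icc 1 M).filter (fun i => ¬ B i ω = true)
        = (Finset.Icc 1 M).filter (fun i => B i ω = false) :=
      Finset.filter_congr fun i _ => by simp
    rw [h2, Nat.card_Icc] at h1
    omega
  have hc2le : ∀ ω : Ω, ((Finset.Ico (M+1) (M+j)).filter fun i => B i ω = true).card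
      ≤ j - 1 := by
    intro ω
    have := Finset.card_filter_le (Finset.Ico (M+1) (M+j)) (fun i => B i ω = true)
    rw [Nat.card_Ico] at this
    omega
  -- the main decomposition of the event
  have hmain : {ω | AjVar B (M - 1) ω = j}
      = ⋃ l ∈ Finset.Icc 1 (min M j),
          ({ω | ((Finset.Icc 1 M).filter fun i => B i ω = false).card = l}
            ∩ {ω | B (M+j) ω = true ∧
                ((Finset.Ico (M+1) (M+j)).filter fun i => B i ω = true).card = l - 1}) := by
    ext ω
    simp only [Set.mem_setOf_eq, Set.mem_iUnion, exists_prop, Finset.mem_Icc,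
      Set.mem_inter_iff]
    have hkj : AjVar B (M-1) ω
        = ((Finset.Icc 1 (sInf {k | 1 ≤ k ∧
            ((Finset.Icc 1 k).filter fun i => B i ω = true).card = M})).filter
            fun i => B i ω = false).card := by
      simp only [AjVar, kjVar, show M - 1 + 1 = M from by omega]
    rw [hkj, stepA (fun i => B i ω) hM hj]
    constructor
    · rintro ⟨hb, hcnt⟩
      have e1 := hc1 ω
      have e2 := hcount ω
      have e3 := hc2le ω
      refine ⟨((Finset.Icc 1 M).filter fun i => B i ω = false).card,
        ⟨by omega, ?_⟩, rfl, hb, by omega⟩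
      rw [le_min_iff]
      omega
    · rintro ⟨l, ⟨hl1, hl2⟩, hFl, hb, hDl⟩
      rw [le_min_iff] at hl2
      have e1 := hc1 ω
      have e2 := hcount ω
      refine ⟨hb, ?_⟩
      omega
  rw [hmain, measure_biUnion_finset ?_ ?_]
  · refine Finset.sum_congr rfl fun l hl => ?_
    rw [countFalseEv_eq_biUnion, D_eq_biUnion M j l hj,
      prob_inter_biUnion_atomEv hB.meas hB.indep hdisj12 (hT1 l) (hT2 l),
      prob_biUnion_atomEv hB.meas hB.indep (hT2 l)]
    have hatom : ∀ t ∈ ((Finset.Ico (M+1) (M+j)).powersetCard (l-1)).image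
        (insert (M+j)), P (atomEv B (Finset.Icc (M+1) (M+j)) t) = 2⁻¹ ^ j := by
      intro t _
      rw [prob_atomEv hB.indep]
      rw [Finset.prod_congr rfl fun i hi =>
        prob_fair hB (by rw [Finset.mem_Icc] at hi; omega) (decide (i ∈ t))]
      rw [Finset.prod_const, Nat.card_Icc]
      congr 1
      omega
    rw [Finset.sum_congr rfl hatom, Finset.sum_const, card_T2, nsmul_eq_mul, mul_assoc]
  · intro l hl l' hl' hne
    simp only [Function.onFun]
    rw [Set.disjoint_left]
    rintro ω ⟨h1, _⟩ ⟨h2, _⟩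
    exact hne (h1 ▸ h2 ▸ rfl)
  · intro l _
    exact (hFmeas l).inter (hDmeas l)

end
end
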